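/- Let k ≥ 1, let B be a binary de Bruijn sequence of order k (a string over {0,1} of length 2^k + k − 1 in which every length-k binary string occurs exactly once as a substring), and let T = φ(B), where φ(0) = abababaabaababa and φ(1) = abababaababaaba. Then every substring of T of length at least 15(k+1) − 1 occurs exactly once in T; equivalently, any two occurrences in T of equal substrings of length at least 15(k+1) − 1 start at the same position. -/

import Mathlib

section Defs

variable {α : Type*}

/-- `C` occurs in `T` at starting position `i`. -/
def OccursAt (C T : List α) (i : ℕ) : Prop :=
  i + C.length ≤ T.length ∧ (T.drop i).take C.length = C

/-- `C` is a cover of `T`: `C` occurs in `T` and every position of `T`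
lies within an occurrence of `C`. -/
def IsCover (C T : List α) : Prop :=
  (∃ i, OccursAt C T i) ∧
    ∀ q, q < T.length → ∃ i, OccursAt C T i ∧ i ≤ q ∧ q < i + C.length

/-- A border of `T` is both a prefix and a suffix of `T`. -/
def IsBorder (B T : List α) : Prop := B <+: T ∧ B <:+ T

/-- `p` is a period of `U`: `U[i] = U[i+p]` for all `0 ≤ i < |U| - p`. -/
def IsPeriod (p : ℕ) (U : List α) : Prop :=
  0 < p ∧ ∀ i, i + p < U.length → U[i]? = U[i + p]?

/-- `U` is aperiodic: its smallest period `p` satisfies `2p > |U|`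
(equivalently, every period `p` of `U` satisfies `2p > |U|`). -/
def StrAperiodic (U : List α) : Prop := ∀ p, IsPeriod p U → U.length < 2 * p

/-- A nonempty string `X` is primitive if `X = Y^t` implies `t = 1`. -/
def StrPrimitive (X : List α) : Prop :=
  X ≠ [] ∧ ∀ (Y : List α) (t : ℕ), X = (List.replicate t Y).flatten → t = 1

/-- A string is superprimitive if it has no proper cover. -/
def Superprimitive (T : List α) : Prop :=
  ¬ ∃ C : List α, IsCover C T ∧ C.length < T.length

/-- The length of the shortest cover of `T`. -/
noncomputable def covLen (T : List α) : ℕ :=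
  sInf {c | ∃ C : List α, C.length = c ∧ IsCover C T}

/-- `{a, a+p, ..., a+(t-1)p}` is a maximal arithmetic progression with
difference `p` inside the set `S`. -/
def MaxProg (S : Set ℕ) (p a t : ℕ) : Prop :=
  0 < t ∧ (∀ r, r < t → a + r * p ∈ S) ∧ (∀ b, b + p = a → b ∉ S) ∧ a + t * p ∉ S

end Defs

/-- The letter `a`. -/
def la : Bool := true
/-- The letter `b`. -/
def lb : Bool := false

/-- `φ(0) = abababa·aba·ababa`. -/
def phi0 : List Bool := [la,lb,la,lb,la,lb,la, la,lb,la, la,lb,la,lb,la]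
/-- `φ(1) = abababa·ababa·aba`. -/
def phi1 : List Bool := [la,lb,la,lb,la,lb,la, la,lb,la,lb,la, la,lb,la]

/-- The morphism `φ` on letters (`false` = 0, `true` = 1). -/
def phi (s : Bool) : List Bool := if s then phi1 else phi0

/-- `φ` applied letter by letter to a binary string. -/
def phiStr (S : List Bool) : List Bool := (S.map phi).flatten

/-- `B` is a binary de Bruijn sequence of order `k`: it has length `2^k + k - 1`
and every length-`k` binary string occurs in it exactly once. -/
def DeBruijn (k : ℕ) (B : List Bool) : Prop :=
  B.length = 2 ^ k + k - 1 ∧ ∀ W : List Bool, W.length = k → ∃! i, OccursAt W B i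


/-!
The two code words `φ(0)`, `φ(1)` have length 15 and the code is synchronizing: `φ(b)` occurs in
`φ(c)φ(c')` only at position `0`. Hence an occurrence of `φ(W)` in `φ(B)`, for nonempty `W`, starts
at a block boundary and, `φ` being injective on letters, comes from an occurrence of `W` in `B`.
A factor of `T = φ(B)` of length at least `15k + 14` contains, at an offset below 15, the full image
`φ(W)` of a factor `W` of `B` of length `k`; two occurrences of the factor therefore give two
occurrences of `W` in `B`, and these coincide because `B` is de Bruijn of order `k`.
-/

section OccursAt

variable {α : Type*} {C X T u : List α} {i t : ℕ}

theorem occursAt_iff_append :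
    OccursAt C T i ↔ ∃ u v, T = u ++ C ++ v ∧ u.length = i := by
  constructor
  · rintro ⟨hlen, hC⟩
    refine ⟨T.take i, T.drop (i + C.length), ?_, by rw [List.length_take]; omega⟩
    conv_lhs => rw [← List.take_append_drop i T, ← List.take_append_drop C.length (T.drop i)]
    rw [hC, List.drop_drop, List.append_assoc]
  · rintro ⟨u, v, rfl, rfl⟩
    exact ⟨by simp, by simp⟩

theorem occursAt_take_drop (h : i + t ≤ T.length) : OccursAt ((T.drop i).take t) T i :=
  ⟨by rw [List.length_take, List.length_drop]; omega, by simp⟩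

theorem OccursAt.trans (hC : OccursAt C X t) (hX : OccursAt X T i) : OccursAt C T (i + t) := by
  obtain ⟨u, v, rfl, rfl⟩ := occursAt_iff_append.1 hC
  obtain ⟨u', v', rfl, rfl⟩ := occursAt_iff_append.1 hX
  exact occursAt_iff_append.2 ⟨u' ++ u, v ++ v', by simp, by simp⟩

theorem OccursAt.of_trans (hX : OccursAt X T i) (hC : OccursAt C T (i + t))
    (ht : t + C.length ≤ X.length) : OccursAt C X t := by
  refine ⟨ht, ?_⟩
  conv_rhs => rw [← hC.2]
  conv_lhs => rw [← hX.2]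
  rw [List.drop_take, List.take_take, List.drop_drop, Nat.min_eq_left (by omega)]

theorem occursAt_append_left_iff : OccursAt C (u ++ T) (u.length + i) ↔ OccursAt C T i := by
  simp only [OccursAt, List.length_append, List.drop_length_add_append]
  exact and_congr_left fun _ => by omega

theorem occursAt_append_right_iff {v : List α} (h : i + C.length ≤ T.length) :
    OccursAt C (T ++ v) i ↔ OccursAt C T i := by
  simp only [OccursAt, List.length_append, List.drop_append_of_le_length (by omega : i ≤ T.length),
    List.take_append_of_le_length (by rw [List.length_drop]; omega : C.length ≤ (T.drop i).length)]
  exact and_congr_left fun _ => by omega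

theorem occursAt_zero_iff : OccursAt C T 0 ↔ C <+: T := by
  rw [List.prefix_iff_eq_take]
  exact ⟨fun h => by simpa using h.2.symm,
    fun h => ⟨by rw [h]; simp, by simpa using h.symm⟩⟩

end OccursAt

theorem phi_length (b : Bool) : (phi b).length = 15 := by
  cases b <;> rfl

theorem phi_injective : Function.Injective phi := by
  intro b c
  cases b <;> cases c <;> decide

@[simp]
theorem phiStr_cons (b : Bool) (S : List Bool) : phiStr (b :: S) = phi b ++ phiStr S := by
  simp [phiStr]

theorem phiStr_append (S S' : List Bool) : phiStr (S ++ S') = phiStr S ++ phiStr S' := by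
  simp [phiStr]

@[simp]
theorem phiStr_length (S : List Bool) : (phiStr S).length = 15 * S.length := by
  induction S with
  | nil => rfl
  | cons b S ih => rw [phiStr_cons, List.length_append, phi_length, ih, List.length_cons]; ring

theorem OccursAt.map_phiStr {W S : List Bool} {m : ℕ} (h : OccursAt W S m) :
    OccursAt (phiStr W) (phiStr S) (15 * m) := by
  obtain ⟨u, v, rfl, rfl⟩ := occursAt_iff_append.1 h
  exact occursAt_iff_append.2 ⟨phiStr u, phiStr v, by simp only [phiStr_append], by simp⟩

theorem eq_zero_of_phi_occursAt_phi_append_phi {b c c' : Bool} {s : ℕ} (hs : s < 15)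
    (h : OccursAt (phi b) (phi c ++ phi c') s) : s = 0 := by
  revert b c c' s
  unfold OccursAt
  decide

theorem dvd_of_phi_occursAt_phiStr {b : Bool} {S : List Bool} {r : ℕ}
    (h : OccursAt (phi b) (phiStr S) r) : 15 ∣ r := by
  have hr : r + 15 ≤ 15 * S.length := by simpa [phi_length] using h.1
  set q := r / 15
  set S' := S ++ [false]
  have hq : q + 1 < S'.length := by
    rw [List.length_append, List.length_singleton]; omega
  -- padding by one letter guarantees two full blocks from block `q` on
  have hsplit : phiStr S' = phiStr (S'.take q) ++ ((phi S'[q] ++ phi S'[q + 1]) ++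
      phiStr (S'.drop (q + 2))) := by
    conv_lhs => rw [← List.take_append_drop q S', List.drop_eq_getElem_cons (by omega),
      List.drop_eq_getElem_cons hq]
    simp only [phiStr_append, phiStr_cons, List.append_assoc]
  have hS' : OccursAt (phi b) (phiStr S') (15 * q + r % 15) := by
    rwa [Nat.div_add_mod, phiStr_append, occursAt_append_right_iff h.1]
  have hprefix : 15 * q = (phiStr (S'.take q)).length := by
    rw [phiStr_length, List.length_take]; omega
  rw [hsplit, hprefix, occursAt_append_left_iff,
    occursAt_append_right_iff (by simp only [List.length_append, phi_length]; omega)] at hS'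
  have := eq_zero_of_phi_occursAt_phi_append_phi (Nat.mod_lt r (by norm_num)) hS'
  omega

theorem prefix_of_phiStr_prefix : ∀ {W S : List Bool}, phiStr W <+: phiStr S → W <+: S
  | [], _, _ => List.nil_prefix
  | w :: W, [], h => by simpa [phi_length] using h.length_le
  | w :: W, s :: S, ⟨t, ht⟩ => by
    rw [phiStr_cons, phiStr_cons, List.append_assoc] at ht
    obtain ⟨hws, hWS⟩ := List.append_inj ht (by simp [phi_length])
    rw [phi_injective hws]
    exact (List.prefix_cons_inj s).2 (prefix_of_phiStr_prefix ⟨t, hWS⟩)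

theorem exists_occursAt_of_phiStr_occursAt {W S : List Bool} {r : ℕ} (hW : W ≠ [])
    (h : OccursAt (phiStr W) (phiStr S) r) : ∃ m, r = 15 * m ∧ OccursAt W S m := by
  obtain ⟨w, W', rfl⟩ := List.exists_cons_of_ne_nil hW
  have hw : OccursAt (phi w) (phiStr (w :: W')) 0 :=
    occursAt_zero_iff.2 (by simp)
  obtain ⟨m, rfl⟩ := dvd_of_phi_occursAt_phiStr (hw.trans h)
  refine ⟨m, rfl, ?_⟩
  have hm : m ≤ S.length := by have := h.1; rw [phiStr_length, phiStr_length] at this; omega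
  rw [← List.take_append_drop m S, phiStr_append,
    show 15 * m = (phiStr (S.take m)).length + 0 by
      rw [phiStr_length, List.length_take]; omega, occursAt_append_left_iff,
    occursAt_zero_iff] at h
  have := (occursAt_append_left_iff (u := S.take m)).2
    (occursAt_zero_iff.2 (prefix_of_phiStr_prefix h))
  rwa [Nat.add_zero, List.length_take_of_le hm, List.take_append_drop] at this


/-- Let `B` be a binary de Bruijn sequence of order `k ≥ 1` and `T = φ(B)`.
Then every substring of `T` of length at least `15(k+1) - 1` occurs exactly
once in `T`: any two occurrences of such a string start at the same position. -/
theorem stmt18 (k : ℕ) (hk : 1 ≤ k) (B : List Bool) (hB : DeBruijn k B) :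
    ∀ X : List Bool, 15 * (k + 1) - 1 ≤ X.length →
      ∀ i j, OccursAt X (phiStr B) i → OccursAt X (phiStr B) j → i = j := by
  intro X hX i j hi hj
  -- `m` is the first block boundary at or after `i`
  set m := (i + 14) / 15
  have hmB : m + k ≤ B.length := by have := hi.1; rw [phiStr_length] at this; omega
  set W := (B.drop m).take k
  have hWlen : W.length = k := by rw [List.length_take, List.length_drop]; omega
  have hWB : OccursAt W B m := occursAt_take_drop hmB
  have hWX : OccursAt (phiStr W) X (15 * m - i) :=
    hi.of_trans (by rw [Nat.add_sub_cancel' (by omega)]; exact hWB.map_phiStr)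
      (by rw [phiStr_length, hWlen]; omega)
  obtain ⟨m', hm', hWB'⟩ := exists_occursAt_of_phiStr_occursAt
    (List.ne_nil_of_length_pos (by omega)) (hWX.trans hj)
  have := (hB.2 W hWlen).unique hWB hWB'
  omega
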